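/- Let p ≥ 1 and let (X, d, m) be a metric measure space whose measure m is β-doubling for some β > 1, with N = log β / log 2, and assume θ_N^−(x) ≥ a for all x ∈ X for some a > 0. Let N̄ > N. Then for every Lipschitz function u : X → ℝ with bounded support satisfying m({x : lip u(x) > 0}) > 0, liminf_{λ→+∞} λ^p · (m × m)(Ē_{λ,u}) = +∞, where Ē_{λ,u} = {(x,y) ∈ X × X : x ≠ y, |u(x) − u(y)| ≥ λ · d(x,y)^{N̄/p + 1}}. -/

import Mathlib

open MeasureTheory Filter Metric Set Topology

/-- The lower pointwise Lipschitz constant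
`lip u (x) = liminf_{r → 0+} sup_{y ∈ B_r(x)} |u y - u x| / r`. -/
noncomputable def lipLower {X : Type*} [MetricSpace X] (u : X → ℝ) (x : X) : ℝ :=
  Filter.liminf (fun r : ℝ => ⨆ y ∈ Metric.ball x r, |u y - u x| / r) (𝓝[>] (0 : ℝ))

/-- The upper pointwise Lipschitz constant
`Lip u (x) = limsup_{r → 0+} sup_{y ∈ B_r(x)} |u y - u x| / r`. -/
noncomputable def lipUpper {X : Type*} [MetricSpace X] (u : X → ℝ) (x : X) : ℝ :=
  Filter.limsup (fun r : ℝ => ⨆ y ∈ Metric.ball x r, |u y - u x| / r) (𝓝[>] (0 : ℝ))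

/-- The set `E_{λ,u} = {(x,y) : x ≠ y, |u x - u y| ≥ λ d(x,y)^{N/p+1}}`. -/
def BVYset {X : Type*} [MetricSpace X] (u : X → ℝ) (N p lam : ℝ) : Set (X × X) :=
  {q : X × X | q.1 ≠ q.2 ∧ lam * dist q.1 q.2 ^ (N / p + 1) ≤ |u q.1 - u q.2|}

/-!
If `lip u > δ > 0` at `x`, then at every small scale `q` some `z` with `d(x,z) < q` has
`|u z - u x| > δ q`, and by the Lipschitz bound every `y` in `B(z, σ q)` (with `σ` depending
only on `δ` and the Lipschitz constant) satisfies `|u x - u y| > δ q / 2` and `d(x,y) < 2 q`.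
For `q ≈ λ^(-p/N̄)` all these pairs `(x, y)` lie in `Ē_{λ,u}`, while doubling and the lower
density bound give `m(B(z, σ q)) ≳ q^N`. Since `lip u > 0` on a set of positive measure, some
`δ` works at all scales `q < δ` for a set of positive measure of points `x`; integrating over it
gives `λ^p (m × m)(Ē_{λ,u}) ≳ λ^p q^N ≈ λ^(p (1 - N/N̄)) → ∞`.
-/

section Measure

variable {X : Type*} [MeasurableSpace X] {μ : Measure X}

lemma exists_pos_measure_of_antitone {G : ℝ → Set X} (hG : Antitone G) {s : Set X}
    (hs : 0 < μ s) (hsG : ∀ x ∈ s, ∃ δ > 0, x ∈ G δ) : ∃ δ > 0, 0 < μ (G δ) := by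
  by_contra! h
  have hsub : s ⊆ ⋃ n : ℕ, G (1 / (n + 1)) := fun x hx => by
    obtain ⟨δ, hδ, hxδ⟩ := hsG x hx
    obtain ⟨n, hn⟩ := exists_nat_one_div_lt hδ
    exact mem_iUnion.2 ⟨n, hG hn.le hxδ⟩
  exact hs.ne' <| measure_mono_null hsub <|
    measure_iUnion_null fun n => nonpos_iff_eq_zero.1 (h _ (by positivity))

lemma mul_measure_le_prod_apply {Y : Type*} [MeasurableSpace Y] {ν : Measure Y} [SFinite ν]
    {E : Set (X × Y)} (hE : MeasurableSet E) {A : Set X} {c : ENNReal}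
    (h : ∀ x ∈ A, c ≤ ν (Prod.mk x ⁻¹' E)) : c * μ A ≤ μ.prod ν E := by
  rw [Measure.prod_apply hE, ← setLIntegral_const]
  exact (setLIntegral_mono (measurable_measure_prodMk_left hE) h).trans
    (setLIntegral_le_lintegral _ _)

end Measure

section Metric

variable {X : Type*} [MetricSpace X]

lemma eventually_exists_dist_lt_mul_lt_abs_sub {u : X → ℝ} {x : X} {c : ℝ} (hc : 0 ≤ c)
    (h : c < lipLower u x) :
    ∀ᶠ r in 𝓝[>] (0 : ℝ), ∃ z, dist x z < r ∧ c * r < |u z - u x| := by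
  have hbdd : IsBoundedUnder (· ≥ ·) (𝓝[>] (0 : ℝ))
      (fun r => ⨆ y ∈ ball x r, |u y - u x| / r) :=
    isBoundedUnder_of_eventually_ge <| eventually_mem_nhdsWithin.mono fun r (hr : 0 < r) =>
      Real.iSup_nonneg fun _ => Real.iSup_nonneg fun _ => div_nonneg (abs_nonneg _) hr.le
  filter_upwards [eventually_lt_of_lt_liminf h hbdd, self_mem_nhdsWithin] with r hlt (hr : 0 < r)
  have : Nonempty X := ⟨x⟩
  obtain ⟨z, hz⟩ := exists_lt_of_lt_ciSup hlt
  by_cases hzx : z ∈ ball x r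
  · rw [ciSup_pos hzx, lt_div_iff₀ hr] at hz
    exact ⟨z, by rwa [dist_comm], hz⟩
  · have : IsEmpty (z ∈ ball x r) := ⟨hzx⟩
    rw [Real.iSup_of_isEmpty] at hz
    exact (hz.not_ge hc).elim

lemma ball_subset_preimage_BVYset {u : X → ℝ} {L : NNReal} (hu : LipschitzWith L u)
    {x z : X} {c q s N p lam : ℝ} (hxz : dist x z < q) (hosc : c * q < |u z - u x|)
    (hsq : s ≤ q) (hLs : L * s ≤ c * q / 2) (he : 0 ≤ N / p + 1) (hlam0 : 0 ≤ lam)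
    (hlam : lam * (2 * q) ^ (N / p + 1) ≤ c * q / 2) :
    ball z s ⊆ Prod.mk x ⁻¹' BVYset u N p lam := by
  intro y (hy : dist y z < s)
  have hzy : |u z - u y| ≤ L * s := by
    rw [← Real.dist_eq]
    exact (hu.dist_le_mul z y).trans (by rw [dist_comm] at hy; gcongr)
  have hxy : c * q / 2 < |u x - u y| := by
    linarith [abs_sub_le (u z) (u y) (u x), abs_sub_comm (u y) (u x)]
  have hdist : dist x y ≤ 2 * q := by
    linarith [dist_triangle_right x y z, dist_nonneg (x := y) (y := z)]
  refine ⟨fun hxy' : x = y => ?_, ?_⟩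
  · subst hxy'
    rw [sub_self, abs_zero] at hxy
    have hs : 0 ≤ s := dist_nonneg.trans hy.le
    linarith [mul_nonneg L.coe_nonneg hs]
  · calc lam * dist x y ^ (N / p + 1) ≤ lam * (2 * q) ^ (N / p + 1) := by gcongr
      _ ≤ |u x - u y| := hlam.trans hxy.le

lemma measurableSet_BVYset [SecondCountableTopology X] [MeasurableSpace X] [BorelSpace X]
    {u : X → ℝ} (hu : Continuous u) {N p lam : ℝ} (he : 0 ≤ N / p + 1) :
    MeasurableSet (BVYset u N p lam) :=
  (isOpen_ne_fun continuous_fst continuous_snd).measurableSet.inter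
    (isClosed_le (continuous_const.mul (continuous_dist.rpow_const fun _ => Or.inr he))
      ((hu.comp continuous_fst).sub (hu.comp continuous_snd)).abs).measurableSet

end Metric

section MetricMeasure

variable {X : Type*} [MetricSpace X] [MeasurableSpace X] {μ : Measure X} {C : ENNReal}

def IsDoublingWith (μ : Measure X) (C : ENNReal) : Prop :=
  ∀ (x : X) (r : ℝ), 0 < r → μ (ball x (2 * r)) ≤ C * μ (ball x r)

lemma measure_ball_two_pow_mul_le (hdbl : IsDoublingWith μ C) (k : ℕ) (x : X) {r : ℝ}
    (hr : 0 < r) :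
    μ (ball x (2 ^ k * r)) ≤ C ^ k * μ (ball x r) := by
  induction k generalizing r with
  | zero => simp
  | succ k ih =>
    calc μ (ball x (2 ^ (k + 1) * r)) = μ (ball x (2 ^ k * (2 * r))) := by ring_nf
      _ ≤ C ^ k * μ (ball x (2 * r)) := ih (by positivity)
      _ ≤ C ^ k * (C * μ (ball x r)) := by gcongr; exact hdbl x r hr
      _ = C ^ (k + 1) * μ (ball x r) := by rw [pow_succ, mul_assoc]

lemma measure_ball_le_pow_mul_measure_ball (hdbl : IsDoublingWith μ C) {x z : X} {q s : ℝ}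
    {k : ℕ} (hs : 0 < s) (hxz : dist x z < q) (hk : 2 * q ≤ 2 ^ k * s) :
    μ (ball x q) ≤ C ^ k * μ (ball z s) :=
  calc μ (ball x q) ≤ μ (ball z (2 ^ k * s)) := measure_mono (ball_subset_ball' (by linarith))
    _ ≤ C ^ k * μ (ball z s) := measure_ball_two_pow_mul_le hdbl k z hs

lemma eventually_mul_rpow_lt_measure_ball {x : X} {N : ℝ} {b : ENNReal}
    (h : b < liminf (fun r : ℝ => μ (ball x r) / ENNReal.ofReal (r ^ N)) (𝓝[>] 0)) :
    ∀ᶠ r in 𝓝[>] (0 : ℝ), b * ENNReal.ofReal (r ^ N) < μ (ball x r) := by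
  filter_upwards [eventually_lt_of_lt_liminf h, self_mem_nhdsWithin] with r hr (hr0 : 0 < r)
  exact (ENNReal.lt_div_iff_mul_lt (Or.inl (ENNReal.ofReal_pos.2 (Real.rpow_pos_of_pos hr0 N)).ne')
    (Or.inl ENNReal.ofReal_ne_top)).1 hr

/-- Using the same `δ` for the range of scales and for the oscillation slope makes the family
antitone in `δ`. -/
def goodSet (μ : Measure X) (u : X → ℝ) (N : ℝ) (b : ENNReal) (δ : ℝ) : Set X :=
  {x | ∀ r ∈ Ioo 0 δ,
    (∃ z, dist x z < r ∧ δ * r < |u z - u x|) ∧ b * ENNReal.ofReal (r ^ N) ≤ μ (ball x r)}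

variable {u : X → ℝ} {N : ℝ} {b : ENNReal}

lemma goodSet_antitone : Antitone (goodSet μ u N b) := by
  intro δ δ' hδ x hx r hr
  obtain ⟨⟨z, hxz, hz⟩, hball⟩ := hx r ⟨hr.1, hr.2.trans_le hδ⟩
  exact ⟨⟨z, hxz, lt_of_le_of_lt (mul_le_mul_of_nonneg_right hδ hr.1.le) hz⟩, hball⟩

lemma exists_pos_mem_goodSet {x : X} (hx : 0 < lipLower u x)
    (hb : b < liminf (fun r : ℝ => μ (ball x r) / ENNReal.ofReal (r ^ N)) (𝓝[>] 0)) :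
    ∃ δ > 0, x ∈ goodSet μ u N b δ := by
  obtain ⟨ε, hε, hsub⟩ := mem_nhdsGT_iff_exists_Ioo_subset.1 <|
    (eventually_exists_dist_lt_mul_lt_abs_sub (half_pos hx).le (half_lt_self hx)).and
      (eventually_mul_rpow_lt_measure_ball hb)
  refine ⟨min (lipLower u x / 2) ε, lt_min (half_pos hx) hε, fun r hr => ?_⟩
  obtain ⟨⟨z, hxz, hz⟩, hball⟩ := hsub ⟨hr.1, hr.2.trans_le (min_le_right _ _)⟩
  exact ⟨⟨z, hxz, lt_of_le_of_lt (mul_le_mul_of_nonneg_right (min_le_left _ _) hr.1.le) hz⟩,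
    hball.le⟩

lemma exists_pos_measure_goodSet
    (hb : ∀ x, b < liminf (fun r : ℝ => μ (ball x r) / ENNReal.ofReal (r ^ N)) (𝓝[>] 0))
    (hpos : 0 < μ {x | 0 < lipLower u x}) : ∃ δ > 0, 0 < μ (goodSet μ u N b δ) :=
  exists_pos_measure_of_antitone goodSet_antitone hpos fun x hx => exists_pos_mem_goodSet hx (hb x)

lemma mul_rpow_le_pow_mul_measure_preimage_BVYset (hdbl : IsDoublingWith μ C)
    {L : NNReal} (hu : LipschitzWith L u) {δ q Nb p lam : ℝ} {k : ℕ} {x : X}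
    (hx : x ∈ goodSet μ u N b δ) (hq : q ∈ Ioo 0 δ) (hk : 4 * (L + δ) ≤ 2 ^ k * δ)
    (he : 0 ≤ Nb / p + 1) (hlam0 : 0 ≤ lam)
    (hlam : lam * (2 * q) ^ (Nb / p + 1) ≤ δ * q / 2) :
    b * ENNReal.ofReal (q ^ N) ≤ C ^ k * μ (Prod.mk x ⁻¹' BVYset u Nb p lam) := by
  obtain ⟨⟨z, hxz, hz⟩, hball⟩ := hx q hq
  obtain ⟨hq0, hqδ⟩ := hq
  have hδ : 0 < δ := hq0.trans hqδ
  have hδq : 0 < δ * q := mul_pos hδ hq0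
  have hL := L.coe_nonneg
  set s := δ * q / (2 * (L + δ))
  have hs : 0 < s := by positivity
  have hsq : s ≤ q := by rw [div_le_iff₀ (by positivity)]; nlinarith
  have hLs : L * s ≤ δ * q / 2 := by
    rw [← mul_div_assoc, div_le_div_iff₀ (by positivity) two_pos]; nlinarith
  have hks : 2 * q ≤ 2 ^ k * s := by
    rw [← mul_div_assoc, le_div_iff₀ (by positivity)]
    nlinarith [mul_le_mul_of_nonneg_right hk hq0.le]
  calc b * ENNReal.ofReal (q ^ N) ≤ μ (ball x q) := hball
    _ ≤ C ^ k * μ (ball z s) := measure_ball_le_pow_mul_measure_ball hdbl hs hxz hks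
    _ ≤ C ^ k * μ (Prod.mk x ⁻¹' BVYset u Nb p lam) := by
      gcongr; exact ball_subset_preimage_BVYset hu hxz hz hsq hLs he hlam0 hlam

lemma div_mul_measure_goodSet_le_prod_BVYset [SFinite μ] [SecondCountableTopology X]
    [BorelSpace X] (hdbl : IsDoublingWith μ C)
    {L : NNReal} (hu : LipschitzWith L u) {δ q Nb p lam : ℝ} {k : ℕ} (hq : q ∈ Ioo 0 δ)
    (hk : 4 * (L + δ) ≤ 2 ^ k * δ) (he : 0 ≤ Nb / p + 1) (hlam0 : 0 ≤ lam)
    (hlam : lam * (2 * q) ^ (Nb / p + 1) ≤ δ * q / 2) :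
    b * ENNReal.ofReal (q ^ N) / C ^ k * μ (goodSet μ u N b δ) ≤
      μ.prod μ (BVYset u Nb p lam) :=
  mul_measure_le_prod_apply (measurableSet_BVYset hu.continuous he) fun _ hx =>
    ENNReal.div_le_of_le_mul'
      (mul_rpow_le_pow_mul_measure_preimage_BVYset hdbl hu hx hq hk he hlam0 hlam)

/-- The scale `q = (c / λ) ^ (p / N̄)` with `c = δ / (2 * 2 ^ (N̄ / p + 1))` is the one at which
`λ (2 q) ^ (N̄ / p + 1) = δ q / 2`. -/
lemma eventually_ofReal_rpow_mul_le_prod_BVYset [SFinite μ] [SecondCountableTopology X]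
    [BorelSpace X] (hdbl : IsDoublingWith μ C)
    {L : NNReal} (hu : LipschitzWith L u) {δ Nb p : ℝ} {k : ℕ} (hδ : 0 < δ)
    (hk : 4 * (L + δ) ≤ 2 ^ k * δ) (hp : 0 < p) (hNb : 0 < Nb) :
    ∀ᶠ lam in atTop,
      ENNReal.ofReal (lam ^ p * (δ / (2 * 2 ^ (Nb / p + 1)) / lam) ^ (p / Nb * N)) *
          (b * μ (goodSet μ u N b δ) / C ^ k) ≤
        ENNReal.ofReal (lam ^ p) * μ.prod μ (BVYset u Nb p lam) := by
  set c := δ / (2 * 2 ^ (Nb / p + 1))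
  have hexp : 0 < p / Nb := div_pos hp hNb
  have hq : Tendsto (fun lam : ℝ => (c / lam) ^ (p / Nb)) atTop (𝓝 0) := by
    have := ((continuous_id.rpow_const fun _ => Or.inr hexp.le).tendsto 0).comp
      (tendsto_const_nhds.div_atTop (tendsto_id (α := ℝ)) (a := c))
    simpa [Function.comp_def, Real.zero_rpow hexp.ne'] using this
  filter_upwards [hq.eventually_lt_const hδ, eventually_gt_atTop 0] with lam hqδ hlam
  set q := (c / lam) ^ (p / Nb)
  have hq0 : 0 < q := by positivity
  have hscale : lam * (2 * q) ^ (Nb / p + 1) = δ * q / 2 := by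
    rw [Real.mul_rpow two_pos.le hq0.le, Real.rpow_add hq0, Real.rpow_one,
      ← Real.rpow_mul (by positivity), div_mul_div_cancel₀ hNb.ne', div_self hp.ne',
      Real.rpow_one]
    simp only [c]
    field_simp
  calc ENNReal.ofReal (lam ^ p * (c / lam) ^ (p / Nb * N)) * (b * μ (goodSet μ u N b δ) / C ^ k)
      = ENNReal.ofReal (lam ^ p) *
          (b * ENNReal.ofReal (q ^ N) / C ^ k * μ (goodSet μ u N b δ)) := by
        rw [Real.rpow_mul (by positivity)]
        change ENNReal.ofReal (lam ^ p * q ^ N) * _ = _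
        rw [ENNReal.ofReal_mul (by positivity)]
        simp only [div_eq_mul_inv]
        ring
    _ ≤ ENNReal.ofReal (lam ^ p) * μ.prod μ (BVYset u Nb p lam) := by
      gcongr
      exact div_mul_measure_goodSet_le_prod_BVYset hdbl hu ⟨hq0, hqδ⟩ hk (by positivity)
        hlam.le hscale.le

end MetricMeasure

lemma tendsto_rpow_mul_div_rpow_atTop {p γ c : ℝ} (hc : 0 < c) (hγ : γ < p) :
    Tendsto (fun lam : ℝ => lam ^ p * (c / lam) ^ γ) atTop atTop := by
  refine ((tendsto_rpow_atTop (sub_pos.2 hγ)).const_mul_atTop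
    (Real.rpow_pos_of_pos hc γ)).congr' ?_
  filter_upwards [eventually_gt_atTop 0] with lam hlam
  rw [Real.div_rpow hc.le hlam.le, Real.rpow_sub hlam]
  field_simp

theorem liminf_top_of_exponent_gt_general
    {X : Type*} [MetricSpace X] [TopologicalSpace.SeparableSpace X]
    [MeasurableSpace X] [BorelSpace X]
    (μ : Measure X) [SigmaFinite μ]
    (p β : ℝ) (hp : 1 ≤ p) (hβ : 1 < β)
    (hdbl : ∀ (x : X) (r : ℝ), 0 < r →
      μ (Metric.ball x (2 * r)) ≤ ENNReal.ofReal β * μ (Metric.ball x r))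
    (N : ℝ) (hN : N = Real.log β / Real.log 2)
    (a : ℝ) (ha : 0 < a)
    (hθ : ∀ x : X,
      ENNReal.ofReal a ≤
        Filter.liminf (fun r : ℝ => μ (Metric.ball x r) / ENNReal.ofReal (r ^ N)) (𝓝[>] (0 : ℝ)))
    (Nbar : ℝ) (hNbarN : N < Nbar)
    (u : X → ℝ) (hu : ∃ L : NNReal, LipschitzWith L u)
    (hpos : 0 < μ {x : X | 0 < lipLower u x}) :
    Filter.liminf
      (fun lam : ℝ => ENNReal.ofReal (lam ^ p) * (μ.prod μ) (BVYset u Nbar p lam))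
      Filter.atTop = ⊤ := by
  obtain ⟨L, hL⟩ := hu
  have : SecondCountableTopology X := UniformSpace.secondCountable_of_separable X
  have hp0 : 0 < p := zero_lt_one.trans_le hp
  have hN0 : 0 < N := hN ▸ div_pos (Real.log_pos hβ) (Real.log_pos one_lt_two)
  have hNbar0 : 0 < Nbar := hN0.trans hNbarN
  set b := ENNReal.ofReal (a / 2)
  obtain ⟨δ, hδ, hG⟩ := exists_pos_measure_goodSet (u := u) (b := b)
    (fun x => ((ENNReal.ofReal_lt_ofReal_iff ha).2 (half_lt_self ha)).trans_le (hθ x)) hpos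
  obtain ⟨k, hk⟩ := pow_unbounded_of_one_lt (4 * (L + δ) / δ) one_lt_two
  set K := b * μ (goodSet μ u N b δ) / ENNReal.ofReal β ^ k
  have hK : K ≠ 0 := (ENNReal.div_pos_iff.2
    ⟨mul_ne_zero (ENNReal.ofReal_pos.2 (half_pos ha)).ne' hG.ne',
      ENNReal.pow_ne_top ENNReal.ofReal_ne_top⟩).ne'
  have hγ : p / Nbar * N < p := by
    calc p / Nbar * N < p / Nbar * Nbar := by gcongr
      _ = p := div_mul_cancel₀ p hNbar0.ne'
  have htop := ENNReal.Tendsto.mul_const (b := K) (ENNReal.tendsto_ofReal_atTop.comp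
    (tendsto_rpow_mul_div_rpow_atTop (c := δ / (2 * 2 ^ (Nbar / p + 1))) (by positivity) hγ))
    (Or.inl ENNReal.top_ne_zero)
  rw [ENNReal.top_mul hK] at htop
  exact (tendsto_nhds_top_mono htop (eventually_ofReal_rpow_mul_le_prod_BVYset hdbl hL hδ
    ((div_lt_iff₀ hδ).1 hk).le hp0 hNbar0)).liminf_eq

theorem liminf_top_of_exponent_gt
    {X : Type*} [MetricSpace X] [CompleteSpace X] [TopologicalSpace.SeparableSpace X]
    [MeasurableSpace X] [BorelSpace X]
    (μ : Measure X) [SigmaFinite μ] [IsLocallyFiniteMeasure μ] [μ.InnerRegular]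
    [μ.IsOpenPosMeasure]
    (p β : ℝ) (hp : 1 ≤ p) (hβ : 1 < β)
    (hdbl : ∀ (x : X) (r : ℝ), 0 < r →
      μ (Metric.ball x (2 * r)) ≤ ENNReal.ofReal β * μ (Metric.ball x r))
    (N : ℝ) (hN : N = Real.log β / Real.log 2)
    (a : ℝ) (ha : 0 < a)
    (hθ : ∀ x : X,
      ENNReal.ofReal a ≤
        Filter.liminf (fun r : ℝ => μ (Metric.ball x r) / ENNReal.ofReal (r ^ N)) (𝓝[>] (0 : ℝ)))
    (Nbar : ℝ) (hNbarN : N < Nbar)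
    (u : X → ℝ) (hu : ∃ L : NNReal, LipschitzWith L u)
    (hsupp : Bornology.IsBounded (Function.support u))
    (hpos : 0 < μ {x : X | 0 < lipLower u x}) :
    Filter.liminf
      (fun lam : ℝ => ENNReal.ofReal (lam ^ p) * (μ.prod μ) (BVYset u Nbar p lam))
      Filter.atTop = ⊤ :=
  liminf_top_of_exponent_gt_general μ p β hp hβ hdbl N hN a ha hθ Nbar hNbarN u hu hpos
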